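/- arXiv:2402.01942 — 3 statements merged into one kernel-verified Lean document; each statement's English description precedes it below -/
import Mathlib

section
/- ST_C({c}) = c · 2^(c−1) for every natural number c ≥ 2, where {c} denotes the singleton multiset containing c. (Fourth item of the paper's Lemma 'SortOneComponent': a single nontrivial crown of size c admits exactly c·2^(c−1) minimum-length sorting scenarios.) -/
def STN : Multiset ℕ → ℕ → ℕ
  | C, 0 =>
      if C = 0 then 1
      else (C.attach.map (fun c => 2 * c.1 * STN (C.erase c.1) c.1)).sum
  | C, (η + 1) =>
      STN C η + (C.attach.map (fun c => 2 * c.1 * STN (C.erase c.1) (η + 1 + c.1))).sum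
  termination_by C η => (Multiset.card C, η)
  decreasing_by
    · exact Prod.Lex.left _ _ (Multiset.card_erase_lt_of_mem c.2)
    · exact Prod.Lex.right _ (Nat.lt_succ_self η)
    · exact Prod.Lex.left _ _ (Multiset.card_erase_lt_of_mem c.2)

def STW : Multiset ℕ → ℕ → ℕ
  | _, 0 => 0
  | C, 1 =>
      if C = 0 then 1
      else (C.attach.map (fun c => 4 * c.1 * STW (C.erase c.1) (c.1 + 1))).sum
  | C, (w + 2) =>
      2 * STW C (w + 1) +
        (C.attach.map (fun c => 4 * c.1 * STW (C.erase c.1) (w + 2 + c.1))).sum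
  termination_by C w => (Multiset.card C, w)
  decreasing_by
    · exact Prod.Lex.left _ _ (Multiset.card_erase_lt_of_mem c.2)
    · exact Prod.Lex.right _ (Nat.lt_succ_self (w + 1))
    · exact Prod.Lex.left _ _ (Multiset.card_erase_lt_of_mem c.2)

def STC (C : Multiset ℕ) : ℕ :=
  (C.map (fun c => c * STW (C.erase c) c)).sum

def STMW : Multiset ℕ → ℕ → ℕ → ℕ
  | _, 0, _ => 0
  | _, _ + 1, 0 => 0
  | C, m + 1, w + 1 =>
      2 * STMW C (m + 1) w +
      (C.attach.map (fun c => 4 * c.1 * STMW (C.erase c.1) (m + 1) (w + 1 + c.1))).sum +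
      ∑ η ∈ Finset.range (m + 1),
        4 * (C.powerset.map (fun C' =>
              Nat.choose (C.sum + Multiset.card C + (m + 1) + (w + 1) - 1)
                  (C'.sum + Multiset.card C' + η) *
                STN C' η * STN (C - C') ((m + 1) + (w + 1) - η - 1))).sum
  termination_by C m w => (Multiset.card C, w)
  decreasing_by
    · exact Prod.Lex.right _ (Nat.lt_succ_self w)
    · exact Prod.Lex.left _ _ (Multiset.card_erase_lt_of_mem c.2)

def STM (C : Multiset ℕ) (m : ℕ) : ℕ :=
  (∑ η ∈ Finset.range m,
    (C.powerset.map (fun C' =>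
        Nat.choose (C.sum + Multiset.card C + m - 1) (C'.sum + Multiset.card C' + η) *
          STN C' η * STN (C - C') (m - η - 1))).sum) +
  (C.map (fun c => c * STMW (C.erase c) m c)).sum

theorem STW_zero_succ (w : ℕ) : STW 0 (w + 1) = 2 ^ w := by
  induction w with
  | zero => simp [STW]
  | succ n ih =>
    rw [show n + 1 + 1 = n + 2 from rfl, STW, ih]
    simp [pow_succ, mul_comm]

theorem STC_singleton_general (c : ℕ) : STC {c} = c * 2 ^ (c - 1) := by
  cases c with
  | zero => simp [STC]
  | succ k => simp [STC, STW_zero_succ]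

/-- ST_C({c}) = c · 2^(c−1) for every c ≥ 2. -/
theorem STC_singleton (c : ℕ) (hc : 2 ≤ c) : STC {c} = c * 2 ^ (c - 1) :=
  STC_singleton_general c
end

section
/- For every finite multiset C of natural numbers all of whose elements are at least 2, and every natural number m ≥ 1, one has ST_M(C, m) = ST_W(C, m). (This is the M/W symmetry of the paper's Corollary 'mwsymmetry', expressed as an identity between the recursively defined counting functions: the expression defining ST_M satisfies the same values as the recurrence defining ST_W.) -/
/-!
The binomial sums in `STM` and `STMW` count interleavings of two independent sorting scenarios,
each for the crowns of one part of a split of `C` together with one N-shaped component.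
Collected as `pairN C a b`, they obey a Pascal-type recursion (`pairN_eq`), which comes from
Pascal's rule for the interleaving coefficient and the recursion of `STN` in either factor; summing
it over a segment of an antidiagonal `a + b = n` gives a recursion for the segment sums `segN`.

`STMW C m w` is defined by a recursion in `w`. Using a "diamond" identity between segment sums
(`segN_diamond`), an induction on `w` shows that it satisfies the mirror recursion in `m` as soon as
all `STMW (C.erase c)` are symmetric; so `STMW` is symmetric by strong induction on `C`.
With this symmetry, unfolding `STM C (m + 1)` shows that `STM` satisfies the defining recursion of
`STW`; both vanish at `0`, hence they agree.
-/

namespace Multiset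

variable {α M : Type*} [DecidableEq α]

theorem sum_map_sum_map_erase_comm [AddCancelCommMonoid M] (s : Multiset α) (f : α → α → M) :
    (s.map fun c => ((s.erase c).map (f c)).sum).sum =
      (s.map fun d => ((s.erase d).map fun c => f c d).sum).sum := by
  have split (g : α → α → M) : (s.map fun c => (s.map (g c)).sum).sum =
      (s.map fun c => g c c).sum + (s.map fun c => ((s.erase c).map (g c)).sum).sum := by
    rw [← sum_map_add]
    exact congrArg _ (map_congr rfl fun c hc => (sum_map_erase hc).symm)
  apply add_left_cancel (a := (s.map fun c => f c c).sum)
  rw [← split f, sum_map_sum_map, split fun d c => f c d]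

theorem sum_antidiagonal_sum_erase_fst [AddCommMonoid M] (s : Multiset α)
    (f : α → Multiset α → Multiset α → M) :
    (s.antidiagonal.map fun x => (x.1.map fun d => f d (x.1.erase d) x.2).sum).sum =
      (s.map fun d => ((s.erase d).antidiagonal.map fun y => f d y.1 y.2).sum).sum := by
  induction s using Multiset.induction_on generalizing f with
  | empty => simp
  | cons a s ih =>
    have hl : ∀ x ∈ s.antidiagonal, (x.1.map fun d => f d ((a ::ₘ x.1).erase d) x.2).sum =
        (x.1.map fun d => f d (a ::ₘ x.1.erase d) x.2).sum := fun x _ =>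
      congrArg sum (map_congr rfl fun d hd => by rw [erase_cons_tail_of_mem hd])
    have hr : ∀ d ∈ s, (((a ::ₘ s).erase d).antidiagonal.map fun y => f d y.1 y.2).sum =
        ((s.erase d).antidiagonal.map fun y => f d y.1 (a ::ₘ y.2)).sum +
          ((s.erase d).antidiagonal.map fun y => f d (a ::ₘ y.1) y.2).sum := fun d hd => by
      simp [erase_cons_tail_of_mem hd]
    have h₁ := ih fun d E F => f d E (a ::ₘ F)
    have h₂ := ih fun d E F => f d (a ::ₘ E) F
    simp only [antidiagonal_cons, map_add, map_map, Function.comp_def, Prod.map, id, sum_add,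
      map_cons, sum_cons, erase_cons_head] at h₁ h₂ ⊢
    rw [sum_map_add, map_congr rfl hl, map_congr rfl hr, sum_map_add, h₁, h₂]
    abel

theorem sum_antidiagonal_sum_erase_snd [AddCommMonoid M] (s : Multiset α)
    (f : α → Multiset α → Multiset α → M) :
    (s.antidiagonal.map fun x => (x.2.map fun d => f d x.1 (x.2.erase d)).sum).sum =
      (s.map fun d => ((s.erase d).antidiagonal.map fun y => f d y.1 y.2).sum).sum := by
  conv_lhs => rw [← map_swap_antidiagonal, map_map]
  simp only [Function.comp_def, Prod.fst_swap, Prod.snd_swap]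
  rw [sum_antidiagonal_sum_erase_fst s fun d E F => f d F E]
  refine congrArg _ (map_congr rfl fun d _ => ?_)
  conv_lhs => rw [← map_swap_antidiagonal, map_map]
  rfl

end Multiset

theorem sum_map_mul_sum_map_erase_swap (C : Multiset ℕ) (g : Multiset ℕ → ℕ → ℕ → ℕ) :
    (C.map fun c => c * ((C.erase c).map fun d => d * g ((C.erase c).erase d) c d).sum).sum =
      (C.map fun c => c * ((C.erase c).map fun d => d * g ((C.erase c).erase d) d c).sum).sum := by
  simp only [← Multiset.sum_map_mul_left]
  rw [Multiset.sum_map_sum_map_erase_comm]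
  refine congrArg _ (Multiset.map_congr rfl fun c _ =>
    congrArg _ (Multiset.map_congr rfl fun d _ => ?_))
  rw [Multiset.erase_comm]
  ring

theorem Nat.choose_succ_add_succ (x y : ℕ) :
    (x + 1 + (y + 1)).choose (x + 1) = (x + (y + 1)).choose x + (y + (x + 1)).choose y := by
  rw [Nat.choose_symm_add (a := y), show x + 1 + (y + 1) = x + y + 1 + 1 by ring,
    Nat.choose_succ_succ', show y + (x + 1) = x + y + 1 by ring,
    show x + (y + 1) = x + y + 1 by ring]

/-- The length of a minimum sorting scenario of the crowns `A` and an N-shaped component of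
size `a`; each step of the recursion of `STN` lowers it by one. -/
def lenN (A : Multiset ℕ) (a : ℕ) : ℕ := A.sum + Multiset.card A + a

theorem lenN_eq_zero {A : Multiset ℕ} {a : ℕ} : lenN A a = 0 ↔ A = 0 ∧ a = 0 := by
  simp only [lenN, Nat.add_eq_zero_iff, Multiset.card_eq_zero]
  exact ⟨fun h => ⟨h.1.2, h.2⟩, by rintro ⟨rfl, rfl⟩; simp⟩

theorem lenN_erase {A : Multiset ℕ} {d : ℕ} (h : d ∈ A) (a : ℕ) :
    lenN (A.erase d) (a + d) + 1 = lenN A a := by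
  have hs := Multiset.sum_erase h
  have hc := Multiset.card_erase_add_one h
  unfold lenN
  omega

def STNstep (A : Multiset ℕ) (a : ℕ) : ℕ :=
  (if a = 0 then 0 else STN A (a - 1)) + (A.map fun d => 2 * d * STN (A.erase d) (a + d)).sum

theorem STN_eq (A : Multiset ℕ) (a : ℕ) :
    STN A a = (if lenN A a = 0 then 1 else 0) + STNstep A a := by
  simp only [lenN_eq_zero, STNstep]
  cases a with
  | zero =>
    rw [STN]
    by_cases hA : A = 0
    · simp [hA]
    · simp [hA, Multiset.attach_map_val' A fun d => 2 * d * STN (A.erase d) d]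
  | succ a =>
    rw [STN, Multiset.attach_map_val' A fun d => 2 * d * STN (A.erase d) (a + 1 + d)]
    simp

theorem STNstep_of_lenN_eq_zero {A : Multiset ℕ} {a : ℕ} (h : lenN A a = 0) :
    STNstep A a = 0 := by
  obtain ⟨rfl, rfl⟩ := lenN_eq_zero.1 h
  simp [STNstep]

/-- Interleavings of a scenario counted by `STN A a` with one counted by `STN B b`. -/
def shuffleN (A : Multiset ℕ) (a : ℕ) (B : Multiset ℕ) (b : ℕ) : ℕ :=
  (lenN A a + lenN B b).choose (lenN A a) * STN A a * STN B b

theorem shuffleN_comm (A : Multiset ℕ) (a : ℕ) (B : Multiset ℕ) (b : ℕ) :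
    shuffleN A a B b = shuffleN B b A a := by
  rw [shuffleN, shuffleN, Nat.choose_symm_add, add_comm (lenN A a)]
  ring

theorem shuffleN_step_fst (A : Multiset ℕ) (a : ℕ) (B : Multiset ℕ) (b : ℕ) :
    (if a = 0 then 0 else shuffleN A (a - 1) B b) +
        (A.map fun d => 2 * d * shuffleN (A.erase d) (a + d) B b).sum =
      (lenN A a - 1 + lenN B b).choose (lenN A a - 1) * STNstep A a * STN B b := by
  have hA : ∀ d ∈ A, 2 * d * shuffleN (A.erase d) (a + d) B b =
      (lenN A a - 1 + lenN B b).choose (lenN A a - 1) * (2 * d * STN (A.erase d) (a + d)) *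
        STN B b := fun d hd => by
    rw [shuffleN, show lenN (A.erase d) (a + d) = lenN A a - 1 by have := lenN_erase hd a; omega]
    ring
  rw [Multiset.map_congr rfl hA, Multiset.sum_map_mul_right, Multiset.sum_map_mul_left, STNstep]
  split_ifs with ha
  · ring
  · rw [shuffleN, show lenN A (a - 1) = lenN A a - 1 by unfold lenN; omega]
    ring

theorem shuffleN_step_snd (A : Multiset ℕ) (a : ℕ) (B : Multiset ℕ) (b : ℕ) :
    (if b = 0 then 0 else shuffleN A a B (b - 1)) +
        (B.map fun d => 2 * d * shuffleN A a (B.erase d) (b + d)).sum =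
      (lenN B b - 1 + lenN A a).choose (lenN B b - 1) * STNstep B b * STN A a := by
  simp only [shuffleN_comm A a]
  exact shuffleN_step_fst B b A a

theorem shuffleN_eq (A : Multiset ℕ) (a : ℕ) (B : Multiset ℕ) (b : ℕ) :
    shuffleN A a B b = (if lenN A a + lenN B b = 0 then 1 else 0) +
      ((if a = 0 then 0 else shuffleN A (a - 1) B b) +
        (A.map fun d => 2 * d * shuffleN (A.erase d) (a + d) B b).sum) +
      ((if b = 0 then 0 else shuffleN A a B (b - 1)) +
        (B.map fun d => 2 * d * shuffleN A a (B.erase d) (b + d)).sum) := by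
  rw [shuffleN_step_fst, shuffleN_step_snd, shuffleN, STN_eq A a, STN_eq B b]
  have hA := @STNstep_of_lenN_eq_zero A a
  have hB := @STNstep_of_lenN_eq_zero B b
  generalize lenN A a = x, lenN B b = y, STNstep A a = s, STNstep B b = t at *
  rcases x with _ | x <;> rcases y with _ | y
  · simp [hA rfl, hB rfl]
  · simp [hA rfl]
  · simp [hB rfl]
  · simp only [Nat.choose_succ_add_succ, Nat.add_eq_zero_iff, one_ne_zero, and_false,
      ↓reduceIte, zero_add, add_tsub_cancel_right]
    ring

/-- The number of scenarios sorting the crowns `C` together with two N-shaped components of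
sizes `a` and `b`: the crowns are split between the two components, whose scenarios are then
interleaved. -/
def pairN (C : Multiset ℕ) (a b : ℕ) : ℕ :=
  (C.antidiagonal.map fun x => shuffleN x.1 a x.2 b).sum

theorem pairN_eq_sum_powerset (C : Multiset ℕ) (a b : ℕ) :
    pairN C a b = (C.powerset.map fun t =>
      (C.sum + Multiset.card C + a + b).choose (t.sum + Multiset.card t + a) *
        STN t a * STN (C - t) b).sum := by
  rw [pairN, ← Multiset.antidiagonal_map_fst, Multiset.map_map]
  refine congrArg _ (Multiset.map_congr rfl fun x hx => ?_)
  obtain rfl := Multiset.mem_antidiagonal.1 hx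
  simp only [shuffleN, lenN, Function.comp_apply, add_tsub_cancel_left, Multiset.sum_add,
    Multiset.card_add]
  ring_nf

theorem pairN_comm (C : Multiset ℕ) (a b : ℕ) : pairN C a b = pairN C b a := by
  rw [pairN, pairN]
  conv_lhs => rw [← Multiset.map_swap_antidiagonal, Multiset.map_map]
  exact congrArg _ (Multiset.map_congr rfl fun x _ => shuffleN_comm _ _ _ _)

theorem pairN_eq (C : Multiset ℕ) (a b : ℕ) :
    pairN C a b = (if C = 0 ∧ a = 0 ∧ b = 0 then 1 else 0) +
      (if a = 0 then 0 else pairN C (a - 1) b) + (if b = 0 then 0 else pairN C a (b - 1)) +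
      (C.map fun d => 2 * d * (pairN (C.erase d) (a + d) b + pairN (C.erase d) a (b + d))).sum := by
  have hδ : (C.antidiagonal.map fun x => if lenN x.1 a + lenN x.2 b = 0 then 1 else 0).sum =
      if C = 0 ∧ a = 0 ∧ b = 0 then 1 else 0 := by
    split_ifs with h
    · obtain ⟨rfl, rfl, rfl⟩ := h
      simp [lenN]
    · refine Multiset.sum_eq_zero fun n hn => ?_
      obtain ⟨x, hx, rfl⟩ := Multiset.mem_map.1 hn
      refine if_neg fun hz => h ?_
      obtain ⟨⟨h₁, rfl⟩, h₂, rfl⟩ := (Nat.add_eq_zero_iff.1 hz).imp lenN_eq_zero.1 lenN_eq_zero.1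
      rw [← Multiset.mem_antidiagonal.1 hx, h₁, h₂]
      simp
  have hfst := Multiset.sum_antidiagonal_sum_erase_fst C fun d E F =>
    2 * d * shuffleN E (a + d) F b
  have hsnd := Multiset.sum_antidiagonal_sum_erase_snd C fun d E F =>
    2 * d * shuffleN E a F (b + d)
  rw [pairN, Multiset.map_congr rfl fun x _ => shuffleN_eq x.1 a x.2 b]
  simp only [Multiset.sum_map_add, hδ, hfst, hsnd, Multiset.sum_map_mul_left]
  simp only [pairN, mul_add, Multiset.sum_map_add]
  by_cases ha : a = 0 <;> by_cases hb : b = 0 <;>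
    simp only [ha, hb, and_self, and_true, and_false, ↓reduceIte, Multiset.map_const',
      Multiset.card_antidiagonal, Multiset.sum_replicate, nsmul_zero, zero_add, add_zero] <;> ring

/-- The sum of `pairN C a (n - a)` over `lo ≤ a < hi`, a segment of the antidiagonal
`a + b = n`; meaningful for `hi ≤ n + 1`, beyond which `n - a` truncates to `0`. -/
def segN (C : Multiset ℕ) (n lo hi : ℕ) : ℕ := ∑ a ∈ Finset.Ico lo hi, pairN C a (n - a)

theorem segN_add (C : Multiset ℕ) (n : ℕ) {lo mid hi : ℕ} (h₁ : lo ≤ mid) (h₂ : mid ≤ hi) :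
    segN C n lo mid + segN C n mid hi = segN C n lo hi :=
  Finset.sum_Ico_consecutive _ h₁ h₂

theorem segN_succ_top (C : Multiset ℕ) (n : ℕ) {lo hi : ℕ} (h : lo ≤ hi) :
    segN C n lo (hi + 1) = segN C n lo hi + pairN C hi (n - hi) :=
  Finset.sum_Ico_succ_top h _

theorem segN_single (C : Multiset ℕ) (n a : ℕ) : segN C n a (a + 1) = pairN C a (n - a) := by
  simp [segN]

theorem segN_reflect (C : Multiset ℕ) {n hi : ℕ} (lo : ℕ) (h : hi ≤ n + 1) :
    segN C n lo hi = segN C n (n + 1 - hi) (n + 1 - lo) := by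
  rw [segN, segN, ← Finset.sum_Ico_reflect _ lo h]
  refine Finset.sum_congr rfl fun a ha => ?_
  rw [pairN_comm, Nat.sub_sub_self (by have := (Finset.mem_Ico.1 ha).2; omega)]

theorem segN_succ (C : Multiset ℕ) {n hi : ℕ} (h : hi ≤ n + 2) :
    segN C (n + 1) 0 hi = segN C n 0 (hi - 1) + segN C n 0 (min hi (n + 1)) +
      (C.map fun d => 2 * d *
        (segN (C.erase d) (n + 1 + d) d (hi + d) + segN (C.erase d) (n + 1 + d) 0 hi)).sum := by
  have hterm : ∀ a ∈ Finset.Ico 0 hi, pairN C a (n + 1 - a) =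
      (if a = 0 then 0 else pairN C (a - 1) (n - (a - 1))) +
        (if a = n + 1 then 0 else pairN C a (n - a)) +
        (C.map fun d => 2 * d * (pairN (C.erase d) (a + d) (n + 1 + d - (a + d)) +
          pairN (C.erase d) a (n + 1 + d - a))).sum := fun a ha => by
    have := (Finset.mem_Ico.1 ha).2
    rw [pairN_eq, if_neg (by omega), zero_add]
    have e₁ : ∀ d, n + 1 + d - (a + d) = n + 1 - a := by omega
    have e₂ : ∀ d, n + 1 + d - a = n + 1 - a + d := by omega
    simp only [e₁, e₂]
    congr 2 <;> split_ifs <;> first | rfl | omega | (congr 1; omega)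
  rw [segN, Finset.sum_congr rfl hterm, Finset.sum_add_distrib, Finset.sum_add_distrib,
    ← Multiset.sum_map_sum]
  congr 2
  · cases hi with
    | zero => simp [segN]
    | succ hi => simp [segN, Finset.sum_range_succ']
  · rcases Nat.lt_or_ge hi (n + 2) with hlt | hge
    · rw [min_eq_left (by omega)]
      exact Finset.sum_congr rfl fun a ha => if_neg (by have := (Finset.mem_Ico.1 ha).2; omega)
    · obtain rfl : hi = n + 2 := by omega
      rw [min_eq_right (by omega), Finset.sum_Ico_succ_top (by omega), if_pos rfl, add_zero]
      exact Finset.sum_congr rfl fun a ha => if_neg (by have := (Finset.mem_Ico.1 ha).2; omega)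
  · refine Multiset.map_congr rfl fun d _ => ?_
    rw [← Finset.mul_sum, Finset.sum_add_distrib, segN, segN,
      Finset.sum_Ico_add' (fun a => pairN (C.erase d) a (n + 1 + d - a)), zero_add]

theorem segN_full_succ (C : Multiset ℕ) (m : ℕ) :
    segN C m 0 (m + 1) = 2 * segN C (m - 1) 0 m +
      4 * (C.map fun c => c * segN (C.erase c) (m + c) c (m + c + 1)).sum +
      if C = 0 ∧ m = 0 then 1 else 0 := by
  cases m with
  | zero =>
    have hmap : ∀ d ∈ C, 2 * d * (pairN (C.erase d) (0 + d) 0 + pairN (C.erase d) 0 (0 + d)) =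
        4 * (d * segN (C.erase d) (0 + d) d (0 + d + 1)) := fun d _ => by
      simp only [zero_add, segN_single, pairN_comm _ 0, Nat.sub_self]
      ring
    rw [segN_single, pairN_eq, ← Multiset.sum_map_mul_left, Multiset.map_congr rfl hmap]
    simp [segN, add_comm]
  | succ n =>
    rw [segN_succ C (hi := n + 2) le_rfl, min_eq_right (by omega), Nat.add_sub_cancel,
      ← Multiset.sum_map_mul_left]
    have hmap : ∀ d ∈ C, 2 * d * (segN (C.erase d) (n + 1 + d) d (n + 2 + d) +
          segN (C.erase d) (n + 1 + d) 0 (n + 2)) =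
        4 * (d * segN (C.erase d) (n + 1 + d) d (n + 1 + d + 1)) := fun d _ => by
      rw [segN_reflect _ 0 (by omega), show n + 1 + d + 1 - (n + 2) = d by omega, Nat.sub_zero,
        show n + 2 + d = n + 1 + d + 1 by ring]
      ring
    rw [Multiset.map_congr rfl hmap]
    simp only [Nat.add_one_sub_one, Nat.add_eq_zero_iff, one_ne_zero, and_false, ↓reduceIte,
      add_zero]
    ring

theorem segN_diamond (C : Multiset ℕ) (m w : ℕ) :
    2 * segN C (m + w) 0 w +
        4 * (C.map fun c => c * segN (C.erase c) (m + w + 1 + c) 0 (w + 1 + c)).sum +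
        segN C (m + w + 1) 0 (m + 1) =
      2 * segN C (m + w) 0 m +
        4 * (C.map fun c => c * segN (C.erase c) (m + w + 1 + c) 0 (m + 1 + c)).sum +
        segN C (m + w + 1) 0 (w + 1) := by
  have hcrown : ∀ c ∈ C,
      4 * (c * segN (C.erase c) (m + w + 1 + c) 0 (w + 1 + c)) +
          2 * c * (segN (C.erase c) (m + w + 1 + c) c (m + 1 + c) +
            segN (C.erase c) (m + w + 1 + c) 0 (m + 1)) =
        4 * (c * segN (C.erase c) (m + w + 1 + c) 0 (m + 1 + c)) +
          2 * c * (segN (C.erase c) (m + w + 1 + c) c (w + 1 + c) +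
            segN (C.erase c) (m + w + 1 + c) 0 (w + 1)) := fun c _ => by
    set s := segN (C.erase c) (m + w + 1 + c)
    have s₁ : s 0 c + s c (w + 1 + c) = s 0 (w + 1 + c) := segN_add _ _ (by omega) (by omega)
    have s₂ : s 0 c + s c (m + 1 + c) = s 0 (m + 1 + c) := segN_add _ _ (by omega) (by omega)
    have t₁ : s c (w + 1 + c) + s (w + 1 + c) (m + w + 2 + c) = s c (m + w + 2 + c) :=
      segN_add _ _ (by omega) (by omega)
    have t₂ : s c (m + 1 + c) + s (m + 1 + c) (m + w + 2 + c) = s c (m + w + 2 + c) :=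
      segN_add _ _ (by omega) (by omega)
    have r₁ : s 0 (m + 1) = s (w + 1 + c) (m + w + 2 + c) := by
      simp only [s]; rw [segN_reflect _ 0 (by omega)]; congr 1 <;> omega
    have r₂ : s 0 (w + 1) = s (m + 1 + c) (m + w + 2 + c) := by
      simp only [s]; rw [segN_reflect _ 0 (by omega)]; congr 1 <;> omega
    have key : 2 * s 0 (w + 1 + c) + (s c (m + 1 + c) + s 0 (m + 1)) =
        2 * s 0 (m + 1 + c) + (s c (w + 1 + c) + s 0 (w + 1)) := by omega
    linear_combination (2 * c) * key
  rw [segN_succ C (n := m + w) (hi := m + 1) (by omega),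
    segN_succ C (n := m + w) (hi := w + 1) (by omega),
    min_eq_left (by omega), min_eq_left (by omega), add_tsub_cancel_right, add_tsub_cancel_right,
    segN_succ_top _ _ (Nat.zero_le m), segN_succ_top _ _ (Nat.zero_le w),
    add_tsub_cancel_left, Nat.add_sub_cancel, pairN_comm C w m]
  have hsum := congrArg Multiset.sum (Multiset.map_congr rfl hcrown)
  simp only [Multiset.sum_map_add, Multiset.sum_map_mul_left] at hsum
  omega

theorem STW_zero (C : Multiset ℕ) : STW C 0 = 0 := by
  rw [STW]

theorem STW_succ (C : Multiset ℕ) (w : ℕ) :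
    STW C (w + 1) = 2 * STW C w + 4 * (C.map fun c => c * STW (C.erase c) (w + 1 + c)).sum +
      if C = 0 ∧ w = 0 then 1 else 0 := by
  rw [← Multiset.sum_map_mul_left]
  simp only [← mul_assoc]
  cases w with
  | zero =>
    rw [STW_zero, zero_add, STW]
    by_cases hC : C = 0
    · simp [hC]
    · simp [hC, Multiset.attach_map_val' C fun c => 4 * c * STW (C.erase c) (c + 1), add_comm]
  | succ w =>
    rw [STW, Multiset.attach_map_val' C fun c => 4 * c * STW (C.erase c) (w + 2 + c)]
    simp

theorem STMW_zero_left (C : Multiset ℕ) (w : ℕ) : STMW C 0 w = 0 := by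
  rw [STMW]

theorem STMW_zero_right (C : Multiset ℕ) (m : ℕ) : STMW C m 0 = 0 := by
  cases m <;> rw [STMW]

theorem STMW_succ_right (C : Multiset ℕ) (m w : ℕ) :
    STMW C m (w + 1) = 2 * STMW C m w +
      4 * (C.map fun c => c * STMW (C.erase c) m (w + 1 + c)).sum + 4 * segN C (m + w) 0 m := by
  cases m with
  | zero => simp [STMW_zero_left, segN]
  | succ m =>
    rw [STMW, Multiset.attach_map_val' C fun c => 4 * c * STMW (C.erase c) (m + 1) (w + 1 + c),
      segN, ← Finset.range_eq_Ico, Finset.mul_sum, ← Multiset.sum_map_mul_left]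
    simp only [mul_assoc 4 _ (STMW _ _ _)]
    congr 1
    refine Finset.sum_congr rfl fun η hη => ?_
    have := Finset.mem_range.1 hη
    rw [pairN_eq_sum_powerset]
    congr 2
    refine Multiset.map_congr rfl fun t _ => ?_
    rw [show C.sum + C.card + (m + 1) + (w + 1) - 1 = C.sum + C.card + η + (m + 1 + w - η) by omega,
      show m + 1 + (w + 1) - η - 1 = m + 1 + w - η by omega]

theorem STMW_succ_left_of_comm {C : Multiset ℕ} (hC : ∀ m w, STMW C m w = STMW C w m)
    (hCc : ∀ c ∈ C, ∀ m w, STMW (C.erase c) m w = STMW (C.erase c) w m) (m w : ℕ) :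
    STMW C (m + 1) w = 2 * STMW C m w +
      4 * (C.map fun c => c * STMW (C.erase c) (m + 1 + c) w).sum + 4 * segN C (m + w) 0 w := by
  have hmap : (C.map fun c => c * STMW (C.erase c) w (m + 1 + c)) =
      C.map fun c => c * STMW (C.erase c) (m + 1 + c) w :=
    Multiset.map_congr rfl fun c hc => by rw [hCc c hc]
  rw [hC, STMW_succ_right, hC w m, hmap, add_comm w m]

theorem STMW_succ_left_of_comm_erase {C : Multiset ℕ}
    (hsub : ∀ c ∈ C, ∀ m w, STMW (C.erase c) m w = STMW (C.erase c) w m)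
    (hsubsub : ∀ c ∈ C, ∀ d ∈ C.erase c, ∀ m w,
      STMW ((C.erase c).erase d) m w = STMW ((C.erase c).erase d) w m) (m w : ℕ) :
    STMW C (m + 1) w = 2 * STMW C m w +
      4 * (C.map fun c => c * STMW (C.erase c) (m + 1 + c) w).sum + 4 * segN C (m + w) 0 w := by
  induction w generalizing m with
  | zero => simp [STMW_zero_right, segN]
  | succ w ihw =>
    have hfst : ∀ c ∈ C, c * STMW (C.erase c) (m + 1) (w + 1 + c) =
        2 * (c * STMW (C.erase c) m (w + 1 + c)) +
        4 * (c * ((C.erase c).map fun d =>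
          d * STMW ((C.erase c).erase d) (m + 1 + d) (w + 1 + c)).sum) +
        4 * (c * segN (C.erase c) (m + w + 1 + c) 0 (w + 1 + c)) := fun c hc => by
      rw [STMW_succ_left_of_comm (hsub c hc) (hsubsub c hc),
        show m + (w + 1 + c) = m + w + 1 + c by ring]
      ring
    have hsnd : ∀ c ∈ C, c * STMW (C.erase c) (m + 1 + c) (w + 1) =
        2 * (c * STMW (C.erase c) (m + 1 + c) w) +
        4 * (c * ((C.erase c).map fun d =>
          d * STMW ((C.erase c).erase d) (m + 1 + c) (w + 1 + d)).sum) +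
        4 * (c * segN (C.erase c) (m + w + 1 + c) 0 (m + 1 + c)) := fun c _ => by
      rw [STMW_succ_right, show m + 1 + c + w = m + w + 1 + c by ring]
      ring
    have hswap := sum_map_mul_sum_map_erase_swap C fun D c d => STMW D (m + 1 + d) (w + 1 + c)
    have h₁ := congrArg Multiset.sum (Multiset.map_congr rfl hfst)
    have h₂ := congrArg Multiset.sum (Multiset.map_congr rfl hsnd)
    simp only [Multiset.sum_map_add, Multiset.sum_map_mul_left] at h₁ h₂
    have hdiamond := segN_diamond C m w
    rw [STMW_succ_right, ihw, STMW_succ_right C m w, show m + 1 + w = m + w + 1 by ring,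
      show m + (w + 1) = m + w + 1 by ring]
    omega

theorem STMW_comm (C : Multiset ℕ) (m w : ℕ) : STMW C m w = STMW C w m := by
  induction C using Multiset.strongInductionOn generalizing m w with
  | ih C IH =>
  have hsub : ∀ c ∈ C, ∀ m w, STMW (C.erase c) m w = STMW (C.erase c) w m :=
    fun c hc => IH _ (Multiset.erase_lt.2 hc)
  have hsubsub : ∀ c ∈ C, ∀ d ∈ C.erase c, ∀ m w,
      STMW ((C.erase c).erase d) m w = STMW ((C.erase c).erase d) w m := fun c hc d _ =>
    IH _ ((Multiset.erase_le d _).trans_lt (Multiset.erase_lt.2 hc))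
  induction w generalizing m with
  | zero => rw [STMW_zero_right, STMW_zero_left]
  | succ w ihw =>
    have hmap : (C.map fun c => c * STMW (C.erase c) m (w + 1 + c)) =
        C.map fun c => c * STMW (C.erase c) (w + 1 + c) m :=
      Multiset.map_congr rfl fun c hc => by rw [hsub c hc]
    rw [STMW_succ_right, STMW_succ_left_of_comm_erase hsub hsubsub, ihw, hmap, add_comm m w]

theorem STM_eq (C : Multiset ℕ) (m : ℕ) :
    STM C m = segN C (m - 1) 0 m + (C.map fun c => c * STMW (C.erase c) m c).sum := by
  rw [STM, segN, ← Finset.range_eq_Ico]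
  congr 1
  refine Finset.sum_congr rfl fun η hη => ?_
  have := Finset.mem_range.1 hη
  rw [pairN_eq_sum_powerset]
  refine congrArg _ (Multiset.map_congr rfl fun t _ => ?_)
  rw [show C.sum + C.card + m - 1 = C.sum + C.card + η + (m - 1 - η) by omega,
    show m - η - 1 = m - 1 - η by omega]

theorem STM_zero (C : Multiset ℕ) : STM C 0 = 0 := by
  simp [STM_eq, segN, STMW_zero_left]

theorem STM_succ (C : Multiset ℕ) (m : ℕ) :
    STM C (m + 1) = 2 * STM C m + 4 * (C.map fun c => c * STM (C.erase c) (m + 1 + c)).sum +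
      if C = 0 ∧ m = 0 then 1 else 0 := by
  have hM : ∀ c ∈ C, c * STMW (C.erase c) (m + 1) c =
      2 * (c * STMW (C.erase c) m c) +
      4 * (c * ((C.erase c).map fun d => d * STMW ((C.erase c).erase d) c (m + 1 + d)).sum) +
      4 * (c * segN (C.erase c) (m + c) 0 c) := fun c _ => by
    rw [STMW_comm, STMW_succ_right, STMW_comm _ c m, add_comm c m]
    ring
  have hW : ∀ c ∈ C, c * STM (C.erase c) (m + 1 + c) =
      c * ((C.erase c).map fun d => d * STMW ((C.erase c).erase d) d (m + 1 + c)).sum +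
      (c * segN (C.erase c) (m + c) 0 c + c * segN (C.erase c) (m + c) c (m + c + 1)) :=
    fun c _ => by
    rw [STM_eq, show m + 1 + c - 1 = m + c by omega, ← segN_add _ _ (Nat.zero_le c) (by omega),
      show m + 1 + c = m + c + 1 by ring]
    simp only [STMW_comm _ (m + c + 1)]
    ring
  have hswap := sum_map_mul_sum_map_erase_swap C fun D c d => STMW D c (m + 1 + d)
  have h₁ := congrArg Multiset.sum (Multiset.map_congr rfl hM)
  have h₂ := congrArg Multiset.sum (Multiset.map_congr rfl hW)
  simp only [Multiset.sum_map_add, Multiset.sum_map_mul_left] at h₁ h₂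
  have hfull := segN_full_succ C m
  rw [STM_eq, STM_eq, Nat.add_sub_cancel]
  omega

theorem STM_eq_STW_general (C : Multiset ℕ) (m : ℕ) :
    STM C m = STW C m := by
  induction C using Multiset.strongInductionOn generalizing m with
  | ih C IH =>
  induction m with
  | zero => rw [STM_zero, STW_zero]
  | succ m ihm =>
    rw [STM_succ, STW_succ, ihm,
      Multiset.map_congr rfl fun c hc => by rw [IH _ (Multiset.erase_lt.2 hc)]]

/-- M/W symmetry: ST_M(C, m) = ST_W(C, m) for crowns of size at least 2 and m ≥ 1. -/
theorem STM_eq_STW (C : Multiset ℕ) (hC : ∀ c ∈ C, 2 ≤ c) (m : ℕ) (hm : 1 ≤ m) :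
    STM C m = STW C m :=
  STM_eq_STW_general C m
end

section
/- Positivity of the sort-together counts (the 'if' direction of the paper's Theorem 'invalidsort', in numeric form): for every finite multiset C of natural numbers all of whose elements are at least 2, (i) ST_N(C, η) ≥ 1 for every natural number η; (ii) ST_W(C, w) ≥ 1 for every w ≥ 1; (iii) ST_C(C) ≥ 1 whenever C ≠ ∅; and (iv) ST_MW(C, m, w) ≥ 1 for all m, w ≥ 1. That is, any collection consisting of nontrivial crowns together with at most one N-shaped component, or at most one W-shaped component, or at most one M-shaped component, or one M-shaped plus one W-shaped component, admits at least one scenario sorting it together. -/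
/-! Every count is a sum of products of natural numbers, so it is positive as soon as one summand
is. Removing a crown `c` from `C` contributes a summand with coefficient `2c` or `4c`, which is
positive because `0 ∉ C`; induction on `|C|` and then on the second argument reduces `ST_N` and
`ST_W` to their base values `1`, and `ST_C` to `ST_W`. For `ST_MW` the convolution summand with
`η = 0` and `C' = ∅` equals `ST_N(C, m + w - 1)`. -/

theorem Multiset.sum_map_pos_of_mem {ι α : Type*} [AddCommMonoid α] [PartialOrder α]
    [CanonicallyOrderedAdd α] {s : Multiset ι} {f : ι → α} {i : ι} (hi : i ∈ s) (h : 0 < f i) :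
    0 < (s.map f).sum :=
  h.trans_le (Multiset.le_sum_of_mem (Multiset.mem_map_of_mem f hi))

theorem STN_pos {C : Multiset ℕ} (hC : 0 ∉ C) (η : ℕ) : 0 < STN C η := by
  induction C using Multiset.strongInductionOn generalizing η with
  | ih C ih =>
  induction η with
  | zero =>
    by_cases hC0 : C = 0
    · simp [STN, hC0]
    · obtain ⟨c, hc⟩ := Multiset.exists_mem_of_ne_zero hC0
      rw [STN, if_neg hC0]
      refine Multiset.sum_map_pos_of_mem (Multiset.mem_attach C ⟨c, hc⟩) ?_
      have hrest := ih _ (Multiset.erase_lt.2 hc) (mt Multiset.mem_of_mem_erase hC) c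
      have hc0 : 0 < c := Nat.pos_of_ne_zero (ne_of_mem_of_not_mem hc hC)
      positivity
  | succ η ih' => rw [STN]; exact ih'.trans_le (Nat.le_add_right _ _)

theorem STW_pos {C : Multiset ℕ} (hC : 0 ∉ C) {w : ℕ} (hw : 0 < w) : 0 < STW C w := by
  induction C using Multiset.strongInductionOn generalizing w with
  | ih C ih =>
  obtain ⟨w, rfl⟩ := Nat.exists_eq_add_one.2 hw
  induction w with
  | zero =>
    by_cases hC0 : C = 0
    · simp [STW, hC0]
    · obtain ⟨c, hc⟩ := Multiset.exists_mem_of_ne_zero hC0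
      rw [STW, if_neg hC0]
      refine Multiset.sum_map_pos_of_mem (Multiset.mem_attach C ⟨c, hc⟩) ?_
      have hrest := ih _ (Multiset.erase_lt.2 hc) (mt Multiset.mem_of_mem_erase hC) c.succ_pos
      have hc0 : 0 < c := Nat.pos_of_ne_zero (ne_of_mem_of_not_mem hc hC)
      positivity
  | succ w ih' =>
    rw [STW]
    have hprev := ih' w.succ_pos
    positivity

theorem STC_pos {C : Multiset ℕ} (hC : 0 ∉ C) (hC0 : C ≠ 0) : 0 < STC C := by
  obtain ⟨c, hc⟩ := Multiset.exists_mem_of_ne_zero hC0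
  have hc0 : 0 < c := Nat.pos_of_ne_zero (ne_of_mem_of_not_mem hc hC)
  have hrest : 0 < STW (C.erase c) c := STW_pos (mt Multiset.mem_of_mem_erase hC) hc0
  exact Multiset.sum_map_pos_of_mem hc (by positivity)

theorem STMW_pos {C : Multiset ℕ} (hC : 0 ∉ C) {m w : ℕ} (hm : 0 < m) (hw : 0 < w) :
    0 < STMW C m w := by
  obtain ⟨m, rfl⟩ := Nat.exists_eq_add_one.2 hm
  obtain ⟨w, rfl⟩ := Nat.exists_eq_add_one.2 hw
  rw [STMW]
  refine add_pos_of_nonneg_of_pos (Nat.zero_le _)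
    (Finset.sum_pos' (fun _ _ => Nat.zero_le _) ⟨0, Finset.mem_range.2 m.succ_pos, ?_⟩)
  refine Nat.mul_pos (by norm_num) (Multiset.sum_map_pos_of_mem (Multiset.zero_mem_powerset C) ?_)
  have h00 : STN 0 0 = 1 := by simp [STN]
  simpa [h00] using STN_pos hC (m + 1 + (w + 1) - 1)

/-- Positivity of the sort-together counts ('if' direction of Theorem invalidsort). -/
theorem ST_pos (C : Multiset ℕ) (hC : ∀ c ∈ C, 2 ≤ c) :
    (∀ η : ℕ, 1 ≤ STN C η) ∧
    (∀ w : ℕ, 1 ≤ w → 1 ≤ STW C w) ∧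
    (C ≠ 0 → 1 ≤ STC C) ∧
    (∀ m w : ℕ, 1 ≤ m → 1 ≤ w → 1 ≤ STMW C m w) := by
  have hC0 : 0 ∉ C := fun h => absurd (hC 0 h) (by norm_num)
  exact ⟨STN_pos hC0, fun _ => STW_pos hC0, STC_pos hC0, fun _ _ => STMW_pos hC0⟩
end
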